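/- Let L be a finite set, c : (L →₀ ℕ) → ℝ≥0 with ∑_μ c_μ ≤ 1, and define f(r) = ∑_μ c_μ · r^μ ∈ [0,∞] for r : L → ℝ≥0. Fix l ∈ L, and for x ∈ ℝ≥0 let 1[l↦x] : L → ℝ≥0 denote the function with value x at l and value 1 at every other element of L. Then, as x → 1 from the left (x ∈ [0,1)), the quotient (f(1) − f(1[l↦x])) / (1 − x) tends in [0,∞] to ∑_μ μ(l) · c_μ (which may be +∞), where 1 denotes the constantly-one function on L. -/

import Mathlib

open scoped NNReal ENNReal

/-- The power series with nonnegative coefficients `c` indexed by finitely supported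
multi-indices, evaluated at `r : L → ℝ≥0`, in `[0,∞]`. -/
noncomputable def powerSeries {L : Type*} (c : (L →₀ ℕ) → ℝ≥0) (r : L → ℝ≥0) : ℝ≥0∞ :=
  ∑' μ : L →₀ ℕ, (c μ : ℝ≥0∞) * μ.prod (fun a n => (r a : ℝ≥0∞) ^ n)

/-!
Termwise, `c_μ (1 - x^{μ l}) / (1 - x) = c_μ ∑_{k < μ l} x^k`, which increases to `μ l · c_μ`
as `x ↑ 1`; monotone convergence for sums in `[0,∞]` carries the limit through the series.
-/

open Filter Topology Finset

theorem ENNReal.tsum_sub_tsum_of_le {ι : Type*} {f g : ι → ℝ≥0∞} (hg : ∑' i, g i ≠ ∞)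
    (hgf : g ≤ f) : ∑' i, f i - ∑' i, g i = ∑' i, (f i - g i) :=
  (ENNReal.sub_eq_of_eq_add hg <| by
    rw [← ENNReal.tsum_add]; exact tsum_congr fun i => (tsub_add_cancel_of_le (hgf i)).symm)

theorem ENNReal.tsum_iSup_of_directed {ι α : Type*} {f : α → ι → ℝ≥0∞}
    (hf : ∀ i j, ∃ k, ∀ a, f a i ≤ f a k ∧ f a j ≤ f a k) :
    ∑' a, ⨆ i, f a i = ⨆ i, ∑' a, f a i := by
  simp only [ENNReal.tsum_eq_iSup_sum, ENNReal.finsetSum_iSup hf]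
  exact iSup_comm

theorem ENNReal.tendsto_tsum_nhdsLT_of_monotone {α ι : Type*} [LinearOrder α]
    [TopologicalSpace α] [OrderTopology α] {a : α} [(𝓝[<] a).NeBot]
    {g : α → ι → ℝ≥0∞} (hg : Monotone g) {G : ι → ℝ≥0∞}
    (hG : ∀ i, Tendsto (g · i) (𝓝[<] a) (𝓝 (G i))) :
    Tendsto (fun x => ∑' i, g x i) (𝓝[<] a) (𝓝 (∑' i, G i)) := by
  have hG_eq : G = fun i => ⨆ x : Set.Iio a, g x i := funext fun i => by
    have hlim_i := Monotone.tendsto_nhdsLT (fun _ _ h => hg h i) a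
    rw [sSup_image'] at hlim_i
    exact tendsto_nhds_unique (hG i) hlim_i
  have hdir : ∀ x y : Set.Iio a, ∃ z : Set.Iio a, ∀ i, g x i ≤ g z i ∧ g y i ≤ g z i :=
    fun x y => ⟨max x y, fun i => ⟨hg (le_max_left x y) i, hg (le_max_right x y) i⟩⟩
  have hlim := Monotone.tendsto_nhdsLT (fun x y h => ENNReal.tsum_le_tsum (hg h)) a
  rwa [sSup_image', ← ENNReal.tsum_iSup_of_directed hdir, ← hG_eq] at hlim

section PowerSeries

variable {L : Type*} (c : (L →₀ ℕ) → ℝ≥0)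

theorem powerSeries_one : powerSeries c 1 = ∑' μ, (c μ : ℝ≥0∞) := by
  simp [powerSeries, Finsupp.prod]

theorem powerSeries_update_one [DecidableEq L] (l : L) (x : ℝ≥0) :
    powerSeries c (Function.update 1 l x) = ∑' μ, ((c μ * x ^ μ l : ℝ≥0) : ℝ≥0∞) := by
  refine tsum_congr fun μ => ?_
  rw [Finsupp.prod, Finset.prod_eq_single l (fun b _ hb => by simp [Function.update_of_ne hb])
    (fun h => by simp [Finsupp.notMem_support_iff.mp h])]
  simp

theorem powerSeries_one_sub_update_one [DecidableEq L] (hc : ∑' μ, (c μ : ℝ≥0∞) ≠ ∞) (l : L)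
    {x : ℝ≥0} (hx : x ≤ 1) :
    powerSeries c 1 - powerSeries c (Function.update 1 l x)
      = (∑' μ, ((c μ * ∑ k ∈ range (μ l), x ^ k : ℝ≥0) : ℝ≥0∞)) * (1 - x) := by
  have hle : ∀ μ, c μ * x ^ μ l ≤ c μ := fun μ => mul_le_of_le_one_right' (pow_le_one₀ x.2 hx)
  rw [powerSeries_one, powerSeries_update_one, ENNReal.tsum_sub_tsum_of_le,
    ← ENNReal.tsum_mul_right]
  · refine tsum_congr fun μ => ?_
    rw [← ENNReal.coe_sub, ← ENNReal.coe_one, ← ENNReal.coe_sub, ← ENNReal.coe_mul, mul_assoc,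
      geom_sum_mul_of_le_one hx, mul_tsub, mul_one]
  · exact ne_top_of_le_ne_top hc (ENNReal.tsum_le_tsum fun μ => ENNReal.coe_le_coe.2 (hle μ))
  · exact fun μ => ENNReal.coe_le_coe.2 (hle μ)

theorem powerSeries_one_sub_update_one_div [DecidableEq L] (hc : ∑' μ, (c μ : ℝ≥0∞) ≠ ∞)
    (l : L) {x : ℝ≥0} (hx : x < 1) :
    (powerSeries c 1 - powerSeries c (Function.update 1 l x)) / (1 - (x : ℝ≥0∞))
      = ∑' μ, ((c μ * ∑ k ∈ range (μ l), x ^ k : ℝ≥0) : ℝ≥0∞) := by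
  rw [powerSeries_one_sub_update_one c hc l hx.le]
  refine ENNReal.mul_div_cancel_right ?_ ?_
  · exact (tsub_pos_of_lt (ENNReal.coe_lt_one_iff.2 hx)).ne'
  · exact ne_top_of_le_ne_top ENNReal.one_ne_top tsub_le_self

end PowerSeries

theorem stmt19_general {L : Type*} [DecidableEq L] (c : (L →₀ ℕ) → ℝ≥0)
    (hc : ∑' μ : L →₀ ℕ, (c μ : ℝ≥0∞) ≤ 1) (l : L) :
    Filter.Tendsto
      (fun x : ℝ≥0 =>
        (powerSeries c 1 - powerSeries c (Function.update (1 : L → ℝ≥0) l x)) /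
          (1 - (x : ℝ≥0∞)))
      (nhdsWithin 1 (Set.Iio 1))
      (nhds (∑' μ : L →₀ ℕ, (μ l : ℝ≥0∞) * (c μ : ℝ≥0∞))) := by
  have hc' : ∑' μ, (c μ : ℝ≥0∞) ≠ ∞ := ne_top_of_le_ne_top ENNReal.one_ne_top hc
  have hmono : Monotone fun (x : ℝ≥0) μ => ((c μ * ∑ k ∈ range (μ l), x ^ k : ℝ≥0) : ℝ≥0∞) :=
    fun x y h μ => ENNReal.coe_le_coe.2 (by gcongr)
  have hterm : ∀ μ : L →₀ ℕ,
      Tendsto (fun x : ℝ≥0 => ((c μ * ∑ k ∈ range (μ l), x ^ k : ℝ≥0) : ℝ≥0∞))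
        (𝓝[<] 1) (𝓝 ((μ l : ℝ≥0∞) * c μ)) := fun μ => by
    have hcont : Continuous fun x : ℝ≥0 => ((c μ * ∑ k ∈ range (μ l), x ^ k : ℝ≥0) : ℝ≥0∞) := by
      fun_prop
    simpa [mul_comm] using (hcont.tendsto 1).mono_left nhdsWithin_le_nhds
  have : (𝓝[<] (1 : ℝ≥0)).NeBot := nhdsLT_neBot_of_exists_lt ⟨0, one_pos⟩
  exact (ENNReal.tendsto_tsum_nhdsLT_of_monotone hmono hterm).congr'
    (eventually_nhdsWithin_of_forall fun x hx =>
      (powerSeries_one_sub_update_one_div c hc' l hx).symm)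

/-- For a finite set `L` and coefficients summing to at most `1`, the partial
difference quotient at the all-ones point in the direction `l` tends, as `x → 1⁻`,
to the partial derivative `∑_μ μ(l)·c_μ` (possibly `+∞`). Here `1[l↦x]` is the
function with value `x` at `l` and `1` elsewhere. -/
theorem stmt19 {L : Type*} [Fintype L] [DecidableEq L] (c : (L →₀ ℕ) → ℝ≥0)
    (hc : ∑' μ : L →₀ ℕ, (c μ : ℝ≥0∞) ≤ 1) (l : L) :
    Filter.Tendsto
      (fun x : ℝ≥0 =>
        (powerSeries c 1 - powerSeries c (Function.update (1 : L → ℝ≥0) l x)) /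
          (1 - (x : ℝ≥0∞)))
      (nhdsWithin 1 (Set.Iio 1))
      (nhds (∑' μ : L →₀ ℕ, (μ l : ℝ≥0∞) * (c μ : ℝ≥0∞))) :=
  stmt19_general c hc l
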